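/- For the profile u_k(ξ) = (1 + e^{-kξ})^{-1}, the travelling-wave ODE U'' + cU' + U(1-U)(U-α) = 0 is satisfied by U = u_k if and only if k² = 1/2 and c = k - (1/2 + α)/k, i.e. c = -√2(1/2 - α) when k = 1/√2. -/

import Mathlib

/-!
The logistic profile `u = u_k` satisfies the Riccati equation `u' = k u (1 - u)`, hence
`u'' = k² u (1 - u) (1 - 2u)`, and the ODE residual factors as
`u (1 - u) ((1 - 2k²) u + (k² + c k - α))`. Since `0 < u < 1` and `u` takes more than one
value, the residual vanishes identically iff both coefficients of the affine factor vanish,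
i.e. `k² = 1/2` and `c k = α - 1/2`.
-/

open Real

noncomputable def logistic (k x : ℝ) : ℝ := (1 + exp (-k * x))⁻¹

namespace logistic

variable {k : ℝ}

lemma pos (k x : ℝ) : 0 < logistic k x := by
  unfold logistic; positivity

lemma lt_one (k x : ℝ) : logistic k x < 1 :=
  inv_lt_one_of_one_lt₀ (lt_add_of_pos_right 1 (exp_pos _))

lemma apply_zero (k : ℝ) : logistic k 0 = 1 / 2 := by
  norm_num [logistic]

lemma apply_neg_log_two_div (hk : k ≠ 0) : logistic k (-log 2 / k) = 1 / 3 := by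
  rw [logistic, show -k * (-log 2 / k) = log 2 by field_simp, exp_log two_pos]
  norm_num

lemma hasDerivAt (k x : ℝ) :
    HasDerivAt (logistic k) (k * logistic k x * (1 - logistic k x)) x := by
  have hexp : HasDerivAt (fun x => exp (-k * x)) (exp (-k * x) * -k) x :=
    ((hasDerivAt_id x).const_mul (-k)).exp.congr_deriv (by simp)
  have hden : (1 + exp (-k * x)) ≠ 0 := by positivity
  refine (hexp.const_add 1).fun_inv hden |>.congr_deriv ?_
  simp only [logistic]
  field_simp
  ring

lemma deriv_eq (k : ℝ) :
    deriv (logistic k) = fun x => k * logistic k x * (1 - logistic k x) :=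
  funext fun x => (hasDerivAt k x).deriv

lemma iteratedDeriv_two (k x : ℝ) :
    iteratedDeriv 2 (logistic k) x
      = k ^ 2 * logistic k x * (1 - logistic k x) * (1 - 2 * logistic k x) := by
  rw [iteratedDeriv_succ, iteratedDeriv_one, deriv_eq]
  refine ((hasDerivAt k x).const_mul k |>.mul ((hasDerivAt k x).const_sub 1)).deriv.trans ?_
  ring

lemma nagumo_residual (α c k x : ℝ) :
    iteratedDeriv 2 (logistic k) x + c * deriv (logistic k) x
        + logistic k x * (1 - logistic k x) * (logistic k x - α)
      = logistic k x * (1 - logistic k x)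
          * ((1 - 2 * k ^ 2) * logistic k x + (k ^ 2 + c * k - α)) := by
  rw [iteratedDeriv_two, deriv_eq]
  ring

lemma forall_affine_eq_zero_iff (hk : k ≠ 0) (a b : ℝ) :
    (∀ x, a * logistic k x + b = 0) ↔ a = 0 ∧ b = 0 := by
  refine ⟨fun h => ?_, fun ⟨ha, hb⟩ _ => by rw [ha, hb]; ring⟩
  have h₀ := h 0
  have h₁ := h (-log 2 / k)
  rw [apply_zero] at h₀
  rw [apply_neg_log_two_div hk] at h₁
  constructor <;> linarith

end logistic

lemma mul_sqrt_two_eq_one_of_sq_eq_half {k : ℝ} (hk : 0 ≤ k) (hk2 : k ^ 2 = 1 / 2) :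
    k * √2 = 1 := by
  rw [← pow_eq_one_iff_of_nonneg (by positivity) two_ne_zero, mul_pow,
    sq_sqrt zero_le_two, hk2]
  norm_num

lemma nagumo_logistic_params_iff {α c k : ℝ} (hk : 0 < k) :
    (1 - 2 * k ^ 2 = 0 ∧ k ^ 2 + c * k - α = 0) ↔ (k ^ 2 = 1 / 2 ∧ c = -√2 * (1 / 2 - α)) := by
  refine ⟨fun ⟨hk2, hck⟩ => ?_, fun ⟨hk2, hc⟩ => ?_⟩
  · have hk2 : k ^ 2 = 1 / 2 := by linarith
    have hks := mul_sqrt_two_eq_one_of_sq_eq_half hk.le hk2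
    exact ⟨hk2, by linear_combination (-c) * hks + √2 * hck - √2 * hk2⟩
  · have hks := mul_sqrt_two_eq_one_of_sq_eq_half hk.le hk2
    exact ⟨by linarith, by linear_combination hk2 + (α - 1 / 2) * hks + k * hc⟩

/-- For the profile `u_k(ξ) = (1 + e^{-kξ})⁻¹` with `k > 0`, the travelling-wave
ODE `U'' + c U' + U(1-U)(U-α) = 0` holds identically if and only if `k² = 1/2`
and `c = -√2 (1/2 - α)` (the value of `k - (1/2+α)/k` type formula at `k = 1/√2`). -/
theorem nagumo_profile_ODE_iff (α c k : ℝ) (hk : 0 < k) :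
    (∀ ξ : ℝ,
        iteratedDeriv 2 (fun x => (1 + Real.exp (-k * x))⁻¹) ξ
          + c * deriv (fun x => (1 + Real.exp (-k * x))⁻¹) ξ
          + (1 + Real.exp (-k * ξ))⁻¹ * (1 - (1 + Real.exp (-k * ξ))⁻¹)
            * ((1 + Real.exp (-k * ξ))⁻¹ - α) = 0)
      ↔ (k ^ 2 = 1 / 2 ∧ c = -Real.sqrt 2 * (1 / 2 - α)) := by
  simp only [← logistic.eq_1, logistic.nagumo_residual, mul_eq_zero,
    (logistic.pos k _).ne', sub_ne_zero.mpr (logistic.lt_one k _).ne', false_or]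
  rw [logistic.forall_affine_eq_zero_iff hk.ne']
  exact nagumo_logistic_params_iff hk
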